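/- For every L > 0 there exists ε > 0 such that the following holds: for every c with 1/L ≤ |c| ≤ L and every h* with 1/L ≤ h* ≤ L, every 2π-periodic C⁴ function h : ℝ → ℝ with h(θ) > 0 for all θ, satisfying −c·h'(θ) + (d/dθ)[h(θ)³·(h'(θ) + h'''(θ))] = 0 for all θ ∈ ℝ, ∫₀^{2π} h(θ) dθ = 2π·h*, and |h(θ) − h*| ≤ ε for all θ, satisfies h(θ) = h* for all θ. -/

import Mathlib

/-!
Integrating the profile equation once gives `h³ (h' + h''') = c h + K` for a constant flux `K`.
Since `h' + h'''` is a derivative of a periodic function, `∫ (c h + K) / h³ = 0`: the number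
`μ = -K / c` is a weighted mean of `h`, hence lies within `ε` of `h*`. Testing the integrated
equation against `h''` and integrating by parts gives `∫ h'² (3μ - 2h) / h⁴ = 0`, while
`3μ - 2h ≥ h* - 5ε > 0`; so `h' = 0`, and the average pins the constant to `h*`.
-/

open Real Set Function intervalIntegral

section Periodic

variable {T : ℝ} {f f' u u' v v' g w : ℝ → ℝ}

lemma Function.Periodic.deriv (hf : Periodic f T) : Periodic (deriv f) T :=
  fun x => by rw [← deriv_comp_add_const, funext hf]

lemma Function.Periodic.integral_eq_zero_of_hasDerivAt (hf : Periodic f T)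
    (hderiv : ∀ x, HasDerivAt f (f' x) x)
    (hint : IntervalIntegrable f' MeasureTheory.volume 0 T) :
    ∫ x in 0..T, f' x = 0 := by
  rw [integral_eq_sub_of_hasDerivAt (fun x _ => hderiv x) hint,
    show f T = f 0 by simpa using hf 0, sub_self]

lemma Function.Periodic.integral_mul_deriv_eq_neg (hu : Periodic u T) (hv : Periodic v T)
    (hu' : ∀ x, HasDerivAt u (u' x) x) (hv' : ∀ x, HasDerivAt v (v' x) x)
    (hcu' : Continuous u') (hcv' : Continuous v') :
    ∫ x in 0..T, u x * v' x = -∫ x in 0..T, u' x * v x := by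
  have hcu : Continuous u := continuous_iff_continuousAt.2 fun x => (hu' x).continuousAt
  have hcv : Continuous v := continuous_iff_continuousAt.2 fun x => (hv' x).continuousAt
  have h0 := (hu.mul hv).integral_eq_zero_of_hasDerivAt (fun x => (hu' x).mul (hv' x))
    (((hcu'.mul hcv).add (hcu.mul hcv')).intervalIntegrable _ _)
  rw [integral_add (f := fun x => u' x * v x) (g := fun x => u x * v' x)
    ((hcu'.mul hcv).intervalIntegrable _ _) ((hcu.mul hcv').intervalIntegrable _ _)] at h0
  linarith

lemma Function.Periodic.eq_zero_of_integral_sq_mul_eq_zero (hT : 0 < T) (hg : Periodic g T)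
    (hgc : Continuous g) (hwc : Continuous w) (hw : ∀ x, 0 < w x)
    (h0 : ∫ x in 0..T, g x ^ 2 * w x = 0) (x : ℝ) : g x = 0 := by
  obtain ⟨y, hy, hxy⟩ := hg.exists_mem_Ico₀ hT x
  rw [hxy]
  by_contra hgy
  have hpos : 0 < ∫ x in 0..T, g x ^ 2 * w x :=
    integral_pos hT ((hgc.pow 2).mul hwc).continuousOn
      (fun x _ => mul_nonneg (sq_nonneg _) (hw x).le)
      ⟨y, Ico_subset_Icc_self hy, mul_pos (by positivity) (hw y)⟩
  exact hpos.ne' h0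

end Periodic

lemma mem_Icc_of_integral_sub_mul_eq_zero {f w : ℝ → ℝ} {T a b μ : ℝ} (hT : 0 < T)
    (hfc : Continuous f) (hwc : Continuous w) (hf : ∀ x, f x ∈ Icc a b) (hw : ∀ x, 0 < w x)
    (h0 : ∫ x in 0..T, (f x - μ) * w x = 0) : μ ∈ Icc a b := by
  have hint : ∀ r, IntervalIntegrable (fun x => r * w x) MeasureTheory.volume 0 T :=
    fun r => (continuous_const.mul hwc).intervalIntegrable _ _
  have hfint : IntervalIntegrable (fun x => (f x - μ) * w x) MeasureTheory.volume 0 T :=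
    ((hfc.sub continuous_const).mul hwc).intervalIntegrable _ _
  have hW : 0 < ∫ x in 0..T, w x :=
    integral_pos hT hwc.continuousOn (fun x _ => (hw x).le) ⟨0, ⟨le_rfl, hT.le⟩, hw 0⟩
  have hlow := integral_mono_on hT.le (hint (a - μ)) hfint fun x _ =>
    mul_le_mul_of_nonneg_right (by linarith [(hf x).1]) (hw x).le
  have hup := integral_mono_on hT.le hfint (hint (b - μ)) fun x _ =>
    mul_le_mul_of_nonneg_right (by linarith [(hf x).2]) (hw x).le
  rw [integral_const_mul, h0] at hlow hup
  constructor <;> nlinarith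

section Profile

variable {T c K : ℝ} {h : ℝ → ℝ}

lemma exists_flux_eq (hh : ContDiff ℝ 4 h)
    (hprofile : ∀ θ, -c * deriv h θ
      + deriv (fun φ => h φ ^ 3 * (deriv h φ + iteratedDeriv 3 h φ)) θ = 0) :
    ∃ K, ∀ x, h x ^ 3 * (deriv h x + deriv (deriv (deriv h)) x) = c * h x + K := by
  have hd0 : Differentiable ℝ h := hh.differentiable (by norm_num)
  have hd1 : Differentiable ℝ (deriv h) := (hh.iterate_deriv' 3 1).differentiable (by norm_num)
  have hd3 : Differentiable ℝ (deriv (deriv (deriv h))) :=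
    (hh.iterate_deriv' 1 3).differentiable one_ne_zero
  set G : ℝ → ℝ := fun φ => h φ ^ 3 * (deriv h φ + deriv (deriv (deriv h)) φ)
  have hG : Differentiable ℝ G := (hd0.pow 3).mul (hd1.add hd3)
  have hF' : ∀ x, deriv (fun φ => G φ - c * h φ) x = 0 := fun x => by
    have hx := hprofile x
    simp only [iteratedDeriv_succ, iteratedDeriv_zero] at hx
    rw [deriv_fun_sub (hG x) ((hd0.const_mul c) x), deriv_const_mul c (hd0 x)]
    linarith
  refine ⟨G 0 - c * h 0, fun x => ?_⟩
  have hx : G x - c * h x = G 0 - c * h 0 :=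
    is_const_of_deriv_eq_zero (hG.sub (hd0.const_mul c)) hF' x 0
  exact eq_add_of_sub_eq' hx

lemma deriv_add_deriv_three_eq_div (hne : ∀ x, h x ≠ 0)
    (hflux : ∀ x, h x ^ 3 * (deriv h x + deriv (deriv (deriv h)) x) = c * h x + K) (x : ℝ) :
    deriv h x + deriv (deriv (deriv h)) x = (c * h x + K) / h x ^ 3 := by
  rw [← hflux, mul_div_cancel_left₀ _ (pow_ne_zero 3 (hne x))]

lemma integral_flux_div_cube_eq_zero (hh : ContDiff ℝ 3 h) (hper : Periodic h T)
    (hne : ∀ x, h x ≠ 0)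
    (hflux : ∀ x, h x ^ 3 * (deriv h x + deriv (deriv (deriv h)) x) = c * h x + K) :
    ∫ x in 0..T, (c * h x + K) / h x ^ 3 = 0 := by
  have hd0 : Differentiable ℝ h := hh.differentiable (by norm_num)
  have hd2 : Differentiable ℝ (deriv (deriv h)) :=
    (hh.iterate_deriv' 1 2).differentiable one_ne_zero
  have hc1 : Continuous (deriv h) := (hh.iterate_deriv' 2 1).continuous
  have hc3 : Continuous (deriv (deriv (deriv h))) := (hh.iterate_deriv' 0 3).continuous
  simp only [← deriv_add_deriv_three_eq_div hne hflux]
  rw [integral_add (hc1.intervalIntegrable _ _) (hc3.intervalIntegrable _ _),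
    hper.integral_eq_zero_of_hasDerivAt (fun x => (hd0 x).hasDerivAt)
      (hc1.intervalIntegrable _ _),
    hper.deriv.deriv.integral_eq_zero_of_hasDerivAt (fun x => (hd2 x).hasDerivAt)
      (hc3.intervalIntegrable _ _), add_zero]

lemma integral_deriv_sq_mul_eq_zero (hh : ContDiff ℝ 3 h) (hper : Periodic h T)
    (hne : ∀ x, h x ≠ 0)
    (hflux : ∀ x, h x ^ 3 * (deriv h x + deriv (deriv (deriv h)) x) = c * h x + K) :
    ∫ x in 0..T, deriv h x ^ 2 * (2 * c * h x + 3 * K) / h x ^ 4 = 0 := by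
  have hd0 : Differentiable ℝ h := hh.differentiable (by norm_num)
  have hd1 : Differentiable ℝ (deriv h) := (hh.iterate_deriv' 2 1).differentiable two_ne_zero
  have hd2 : Differentiable ℝ (deriv (deriv h)) :=
    (hh.iterate_deriv' 1 2).differentiable one_ne_zero
  have hc3 : Continuous (deriv (deriv (deriv h))) := (hh.iterate_deriv' 0 3).continuous
  -- `(h'² + h''²) / 2` is a primitive of `(h' + h''') h''`
  have hE : Periodic (fun x => (deriv h x ^ 2 + deriv (deriv h) x ^ 2) / 2) T := fun x => by
    simp only [hper.deriv x, hper.deriv.deriv x]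
  have henergy : ∫ x in 0..T, (deriv h x + deriv (deriv (deriv h)) x) * deriv (deriv h) x = 0 :=
    hE.integral_eq_zero_of_hasDerivAt
      (fun x => ((((hd1 x).hasDerivAt.fun_pow 2).add ((hd2 x).hasDerivAt.fun_pow 2)).div_const 2)
        |>.congr_deriv (by ring))
      (((hd1.continuous.add hc3).mul hd2.continuous).intervalIntegrable _ _)
  set u : ℝ → ℝ := fun x => (c * h x + K) / h x ^ 3
  set u' : ℝ → ℝ := fun x => -(deriv h x * (2 * c * h x + 3 * K) / h x ^ 4)
  have hu : ∀ x, HasDerivAt u (u' x) x := fun x => by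
    refine ((((hd0 x).hasDerivAt.const_mul c).add_const K).div
      ((hd0 x).hasDerivAt.fun_pow 3) (pow_ne_zero 3 (hne x))).congr_deriv ?_
    have := hne x
    simp only [u']
    field_simp
    ring
  have hu'c : Continuous u' :=
    ((hd1.continuous.mul ((continuous_const.mul hd0.continuous).add continuous_const)).div
      (hd0.continuous.pow 4) fun x => pow_ne_zero 4 (hne x)).neg
  have hparts := Periodic.integral_mul_deriv_eq_neg (u := u)
    (hper.comp fun y => (c * y + K) / y ^ 3) hper.deriv hu (fun x => (hd1 x).hasDerivAt) hu'c
    hd2.continuous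
  calc ∫ x in 0..T, deriv h x ^ 2 * (2 * c * h x + 3 * K) / h x ^ 4
      = -∫ x in 0..T, u' x * deriv h x := by
        rw [← integral_neg]
        exact integral_congr fun x _ => by simp only [u']; ring
    _ = ∫ x in 0..T, u x * deriv (deriv h) x := hparts.symm
    _ = ∫ x in 0..T, (deriv h x + deriv (deriv (deriv h)) x) * deriv (deriv h) x :=
        integral_congr fun x _ => by rw [deriv_add_deriv_three_eq_div hne hflux]
    _ = 0 := henergy

lemma deriv_eq_zero_of_flux {a b : ℝ} (hT : 0 < T) (hc : c ≠ 0) (hh : ContDiff ℝ 3 h)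
    (hper : Periodic h T) (hpos : ∀ x, 0 < h x)
    (hflux : ∀ x, h x ^ 3 * (deriv h x + deriv (deriv (deriv h)) x) = c * h x + K)
    (hab : ∀ x, h x ∈ Icc a b) (hba : 2 * b < 3 * a) (x : ℝ) :
    deriv h x = 0 := by
  have hne : ∀ x, h x ≠ 0 := fun x => (hpos x).ne'
  have hcont : Continuous h := hh.continuous
  obtain ⟨μ, hK⟩ : ∃ μ, K = -(c * μ) := ⟨-K / c, by field_simp⟩
  have hmean : μ ∈ Icc a b := by
    have h0 := integral_flux_div_cube_eq_zero hh hper hne hflux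
    rw [integral_congr (g := fun x => c * ((h x - μ) * (1 / h x ^ 3)))
      (fun x _ => by dsimp only; rw [hK]; ring), integral_const_mul] at h0
    exact mem_Icc_of_integral_sub_mul_eq_zero hT hcont
      (continuous_const.div (hcont.pow 3) fun x => pow_ne_zero 3 (hne x)) hab
      (fun x => one_div_pos.2 (pow_pos (hpos x) 3)) ((mul_eq_zero.1 h0).resolve_left hc)
  have henergy : ∫ x in 0..T, deriv h x ^ 2 * ((3 * μ - 2 * h x) / h x ^ 4) = 0 := by
    have h0 := integral_deriv_sq_mul_eq_zero hh hper hne hflux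
    rw [integral_congr (g := fun x => -c * (deriv h x ^ 2 * ((3 * μ - 2 * h x) / h x ^ 4)))
      (fun x _ => by dsimp only; rw [hK]; ring), integral_const_mul] at h0
    exact (mul_eq_zero.1 h0).resolve_left (neg_ne_zero.2 hc)
  exact hper.deriv.eq_zero_of_integral_sq_mul_eq_zero (w := fun x => (3 * μ - 2 * h x) / h x ^ 4)
    hT (hh.continuous_deriv (by norm_num))
    ((continuous_const.sub (continuous_const.mul hcont)).div (hcont.pow 4)
      fun x => pow_ne_zero 4 (hne x))
    (fun x => div_pos (by linarith [(hab x).2, hmean.1]) (pow_pos (hpos x) 4)) henergy x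

end Profile

/-- Near-constant uniqueness for travelling waves (dominant surface tension)
    with prescribed average: for 1/L ≤ |c| ≤ L, a positive 2π-periodic C⁴
    solution of −c·h' + ∂_θ(h³(h' + h''')) = 0 with average h* that stays
    ε-close to h* equals h*. -/
theorem stmt_11 (L : ℝ) (hL : 0 < L) :
    ∃ ε : ℝ, 0 < ε ∧
      ∀ c : ℝ, 1 / L ≤ |c| → |c| ≤ L →
        ∀ hstar : ℝ, 1 / L ≤ hstar → hstar ≤ L →
          ∀ h : ℝ → ℝ, Function.Periodic h (2 * π) → ContDiff ℝ 4 h →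
            (∀ θ, 0 < h θ) →
            (∀ θ : ℝ, -c * deriv h θ
                + deriv (fun φ => (h φ) ^ 3 * (deriv h φ + iteratedDeriv 3 h φ)) θ
                = 0) →
            (∫ θ in (0:ℝ)..(2 * π), h θ) = 2 * π * hstar →
            (∀ θ : ℝ, |h θ - hstar| ≤ ε) →
            ∀ θ : ℝ, h θ = hstar := by
  refine ⟨1 / (10 * L), by positivity, ?_⟩
  intro c hc _ hstar hstar_lb _ h hper hh hpos hprofile havg hnear
  have hL' : 0 < 1 / L := by positivity
  have hc0 : c ≠ 0 := by rintro rfl; rw [abs_zero] at hc; linarith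
  obtain ⟨K, hflux⟩ := exists_flux_eq hh hprofile
  have hderiv : ∀ x, deriv h x = 0 :=
    deriv_eq_zero_of_flux two_pi_pos hc0 (hh.of_le (by norm_num)) hper hpos hflux
      (a := hstar - 1 / (10 * L)) (b := hstar + 1 / (10 * L))
      (fun x => by constructor <;> linarith [abs_le.1 (hnear x)])
      (by linarith [show 1 / (10 * L) = 1 / L / 10 by field_simp])
  have hconst : ∀ x, h x = h 0 := fun x =>
    is_const_of_deriv_eq_zero (hh.differentiable (by norm_num)) hderiv x 0
  have hmean : h 0 = hstar := by
    rw [integral_congr (g := fun _ => h 0) fun x _ => hconst x, integral_const, smul_eq_mul,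
      sub_zero] at havg
    exact mul_left_cancel₀ two_pi_pos.ne' havg
  intro θ
  rw [hconst θ, hmean]
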